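/- Shifting heights by 2 gives, for every n ≥ 1 and every k ≥ 1, a bijection between isomorphism classes of untwisted extended fission trees of slope k and rank n and isomorphism classes of untwisted fission trees of slope k+2 and rank n; moreover isomorphism classes of untwisted extended fission trees of slope 0 and rank n are in bijection with isomorphism classes of untwisted fission trees of slope ≤ 2 and rank n. Under these bijections the semisimple extended fission trees correspond exactly to the multiplicity-one fission trees. -/

import Mathlib

/-- A fission chain of slope `≤ k` with `n` leaves: a chain of surjective maps of
finite sets `J₁ ↠ J₂ ↠ ⋯ ↠ J_{k+1}` with `|J₁| = n` and `|J_{k+1}| = 1`.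
We encode `J_{i+1} := Fin (size i)`; the chain is prolonged trivially above
height `k+1` (all later sets necessarily also have one element, since all the
maps are surjective). -/
structure FChain (k n : ℕ) where
  size : ℕ → ℕ
  map : ∀ i, Fin (size i) → Fin (size (i+1))
  surj : ∀ i, Function.Surjective (map i)
  size_zero : size 0 = n
  size_top : size k = 1

/-- A fission chain of slope `≤ k` has slope exactly `k` if `k = 0` or `|J_k| ≥ 2`
(here `J_k = Fin (size (k-1))`). -/
def FChain.ExactSlope {k n : ℕ} (c : FChain k n) : Prop :=
  k = 0 ∨ 2 ≤ c.size (k - 1)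

/-- Isomorphism of fission chains: bijections between the corresponding sets
commuting with all the maps. -/
def FChain.Iso {k n m : ℕ} (c : FChain k n) (d : FChain k m) : Prop :=
  ∃ e : ∀ i, Fin (c.size i) ≃ Fin (d.size i),
    ∀ i x, e (i+1) (c.map i x) = d.map i (e i x)

/-- `Φ(k,n)`: the number of isomorphism classes of fission chains of slope `≤ k`
with `n` leaves. -/
noncomputable def PhiBig (k n : ℕ) : ℕ :=
  Nat.card (Quot (fun c d : FChain k n => c.Iso d))

/-- `φ(k,n)`: the number of isomorphism classes of fission chains of slope
exactly `k` with `n` leaves. -/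
noncomputable def phi (k n : ℕ) : ℕ :=
  Nat.card (Quot (fun c d : {c : FChain k n // c.ExactSlope} => c.1.Iso d.1))

/-- An untwisted fission tree of slope `k` and rank `n`: a fission chain of slope
exactly `k` together with a multiplicity map `μ : J₁ → ℤ_{≥1}` with `Σ μ = n`. -/
structure FTree (k n : ℕ) where
  leaves : ℕ
  chain : FChain k leaves
  exact : chain.ExactSlope
  mult : Fin (chain.size 0) → ℕ
  mult_pos : ∀ i, 1 ≤ mult i
  mult_sum : ∑ i, mult i = n

/-- Isomorphism of untwisted fission trees: an isomorphism of the underlying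
chains intertwining the multiplicity maps. -/
def FTree.Iso {k n : ℕ} (T U : FTree k n) : Prop :=
  ∃ e : ∀ i, Fin (T.chain.size i) ≃ Fin (U.chain.size i),
    (∀ i x, e (i+1) (T.chain.map i x) = U.chain.map i (e i x)) ∧
    (∀ x, U.mult (e 0 x) = T.mult x)

/-- `ψ(k,n)`: the number of isomorphism classes of untwisted fission trees of
slope `k` and rank `n`. -/
noncomputable def psi (k n : ℕ) : ℕ :=
  Nat.card (Quot (fun T U : FTree k n => T.Iso U))

/-- A tame fission tree of rank `n`: a surjective map of finite sets
`J_{-1} ↠ J_0` together with a multiplicity map `μ : J_{-1} → ℤ_{≥1}` with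
`Σ μ = n`. -/
structure Tame (n : ℕ) where
  a : ℕ
  b : ℕ
  f : Fin a → Fin b
  surj : Function.Surjective f
  μ : Fin a → ℕ
  μ_pos : ∀ i, 1 ≤ μ i
  μ_sum : ∑ i, μ i = n

/-- A tame fission tree is semisimple if every Jordan block has size 1. -/
def Tame.Semisimple {n : ℕ} (t : Tame n) : Prop := ∀ i, t.μ i = 1

/-- Isomorphism of tame fission trees. -/
def Tame.Iso {n m : ℕ} (t : Tame n) (u : Tame m) : Prop :=
  ∃ (α : Fin t.a ≃ Fin u.a) (β : Fin t.b ≃ Fin u.b),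
    (∀ x, β (t.f x) = u.f (α x)) ∧ ∀ x, u.μ (α x) = t.μ x

/-- An untwisted extended fission tree of slope `k` and rank `n`: an untwisted
fission tree of slope `k` together with a tame fission tree of rank `mult i`
for each leaf `i`. -/
structure EFT (k n : ℕ) where
  leaves : ℕ
  chain : FChain k leaves
  exact : chain.ExactSlope
  mult : Fin (chain.size 0) → ℕ
  mult_pos : ∀ i, 1 ≤ mult i
  mult_sum : ∑ i, mult i = n
  tame : ∀ i : Fin (chain.size 0), Tame (mult i)

/-- An extended fission tree is semisimple if all its tame fission trees are. -/
def EFT.Semisimple {k n : ℕ} (T : EFT k n) : Prop := ∀ i, (T.tame i).Semisimple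

/-- Isomorphism of extended fission trees: an isomorphism of the underlying
fission trees together with compatible isomorphisms of the tame fission trees
at the leaves. -/
def EFT.Iso {k n : ℕ} (T U : EFT k n) : Prop :=
  ∃ e : ∀ i, Fin (T.chain.size i) ≃ Fin (U.chain.size i),
    (∀ i x, e (i+1) (T.chain.map i x) = U.chain.map i (e i x)) ∧
    (∀ x, U.mult (e 0 x) = T.mult x) ∧
    (∀ x, (T.tame x).Iso (U.tame (e 0 x)))

/-- An untwisted fission tree of slope ≤ k and rank n: a fission chain of slope
≤ k together with a multiplicity map with total sum n. -/
structure FTreeLe (k n : ℕ) where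
  leaves : ℕ
  chain : FChain k leaves
  mult : Fin (chain.size 0) → ℕ
  mult_pos : ∀ i, 1 ≤ mult i
  mult_sum : ∑ i, mult i = n

/-- Isomorphism of such fission trees. -/
def FTreeLe.Iso {k n : ℕ} (T U : FTreeLe k n) : Prop :=
  ∃ e : ∀ i, Fin (T.chain.size i) ≃ Fin (U.chain.size i),
    (∀ i x, e (i+1) (T.chain.map i x) = U.chain.map i (e i x)) ∧
    (∀ x, U.mult (e 0 x) = T.mult x)

/-- A fission tree is multiplicity-one if all its multiplicities equal 1. -/
def FTree.MultOne {k n : ℕ} (T : FTree k n) : Prop := ∀ i, T.mult i = 1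

/-- A fission tree of slope ≤ k is multiplicity-one if all its multiplicities
equal 1. -/
def FTreeLe.MultOne {k n : ℕ} (T : FTreeLe k n) : Prop := ∀ i, T.mult i = 1


/-! ### Auxiliary machinery -/

namespace FShift

open Equiv

/-- A (noncanonical) equivalence between a sigma of `Fin`s and a `Fin` of the sum. -/
noncomputable def sigEquiv {m : ℕ} (a : Fin m → ℕ) : (Σ i, Fin (a i)) ≃ Fin (∑ i, a i) :=
  Fintype.equivFinOfCardEq (by simp)

theorem sum_sigma' {m : ℕ} {β : Fin m → Type*} [∀ i, Fintype (β i)] (f : (Σ i, β i) → ℕ) :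
    ∑ x : Σ i, β i, f x = ∑ i, ∑ y : β i, f ⟨i, y⟩ := by
  rw [← Finset.univ_sigma_univ, Finset.sum_sigma]

/-- The fiber of the first projection of a sigma type. -/
def sigmaFstFiber {ι : Type*} {β : ι → Type*} (i : ι) :
    {σ : Σ j, β j // σ.1 = i} ≃ β i where
  toFun σ := σ.2 ▸ σ.1.2
  invFun b := ⟨⟨i, b⟩, rfl⟩
  left_inv := by rintro ⟨⟨j, b⟩, rfl⟩; rfl
  right_inv b := rfl

variable {k n : ℕ}

theorem tame_a_pos {m : ℕ} (t : Tame m) (hm : 1 ≤ m) : 0 < t.a := by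
  rw [Fin.pos_iff_nonempty]
  by_contra h
  rw [not_nonempty_iff] at h
  have hs := t.μ_sum
  rw [Finset.univ_eq_empty, Finset.sum_empty] at hs
  omega

theorem tame_b_pos {m : ℕ} (t : Tame m) (hm : 1 ≤ m) : 0 < t.b := by
  rw [Fin.pos_iff_nonempty]
  obtain ⟨x⟩ := Fin.pos_iff_nonempty.mp (tame_a_pos t hm)
  exact ⟨t.f x⟩

/-! ### The forward construction -/

@[reducible] def fwdSize (T : EFT k n) : ℕ → ℕ
  | 0 => ∑ i, (T.tame i).a
  | 1 => ∑ i, (T.tame i).b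
  | (j+2) => T.chain.size j

noncomputable def eqA (T : EFT k n) : (Σ i, Fin ((T.tame i).a)) ≃ Fin (fwdSize T 0) :=
  sigEquiv _

noncomputable def eqB (T : EFT k n) : (Σ i, Fin ((T.tame i).b)) ≃ Fin (fwdSize T 1) :=
  sigEquiv _

@[reducible] def fwdSig (T : EFT k n) (σ : Σ i, Fin ((T.tame i).a)) : Σ i, Fin ((T.tame i).b) :=
  ⟨σ.1, (T.tame σ.1).f σ.2⟩

@[reducible] def multSig (T : EFT k n) (σ : Σ i, Fin ((T.tame i).a)) : ℕ :=
  (T.tame σ.1).μ σ.2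

@[reducible] noncomputable def fwdMap (T : EFT k n) : ∀ j, Fin (fwdSize T j) → Fin (fwdSize T (j+1))
  | 0 => fun x => eqB T (fwdSig T ((eqA T).symm x))
  | 1 => fun y => ((eqB T).symm y).1
  | (j+2) => T.chain.map j

@[reducible] noncomputable def fwdChain (T : EFT k n) : FChain (k+2) (fwdSize T 0) where
  size := fwdSize T
  map := fwdMap T
  surj := by
    intro j
    match j with
    | 0 =>
      intro y
      rcases hy : (eqB T).symm y with ⟨i, z⟩
      obtain ⟨w, hw⟩ := (T.tame i).surj z
      refine ⟨eqA T ⟨i, w⟩, ?_⟩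
      show eqB T (fwdSig T ((eqA T).symm (eqA T ⟨i, w⟩))) = y
      rw [Equiv.symm_apply_apply]
      have : fwdSig T ⟨i, w⟩ = ⟨i, z⟩ := by simp [fwdSig, hw]
      rw [this, ← hy, Equiv.apply_symm_apply]
    | 1 =>
      intro i
      obtain ⟨z⟩ := Fin.pos_iff_nonempty.mp (tame_b_pos (T.tame i) (T.mult_pos i))
      refine ⟨eqB T ⟨i, z⟩, ?_⟩
      show ((eqB T).symm (eqB T ⟨i, z⟩)).1 = i
      rw [Equiv.symm_apply_apply]
    | (j+2) => exact T.chain.surj j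
  size_zero := rfl
  size_top := T.chain.size_top

@[reducible] noncomputable def fwd (T : EFT k n) : FTreeLe (k+2) n where
  leaves := fwdSize T 0
  chain := fwdChain T
  mult := fun x => multSig T ((eqA T).symm x)
  mult_pos := fun x => (T.tame _).μ_pos _
  mult_sum := by
    have h1 : ∑ x : Fin (fwdSize T 0), multSig T ((eqA T).symm x) = ∑ σ, multSig T σ :=
      Equiv.sum_comp (eqA T).symm (multSig T)
    show ∑ x : Fin (fwdSize T 0), multSig T ((eqA T).symm x) = n
    rw [h1, sum_sigma']
    have h2 : ∀ i : Fin (T.chain.size 0), ∑ y, multSig T ⟨i, y⟩ = T.mult i := fun i =>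
      (T.tame i).μ_sum
    rw [Finset.sum_congr rfl fun i _ => h2 i]
    exact T.mult_sum

theorem fwd_exact (hk : 1 ≤ k) (T : EFT k n) : (fwd T).chain.ExactSlope := by
  right
  show 2 ≤ fwdSize T (k + 2 - 1)
  obtain ⟨k', rfl⟩ : ∃ k', k = k' + 1 := ⟨k - 1, by omega⟩
  have h1 : k' + 1 + 2 - 1 = k' + 2 := by omega
  rw [h1]
  show 2 ≤ T.chain.size k'
  rcases T.exact with h | h
  · omega
  · have h2 : k' + 1 - 1 = k' := by omega
    rwa [h2] at h

@[reducible] noncomputable def fwdT (hk : 1 ≤ k) (T : EFT k n) : FTree (k+2) n :=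
  ⟨(fwd T).leaves, (fwd T).chain, fwd_exact hk T, (fwd T).mult, (fwd T).mult_pos,
    (fwd T).mult_sum⟩

/-! ### The backward construction -/

@[reducible] def bwdPi (U : FTreeLe (k+2) n) : Fin (U.chain.size 0) → Fin (U.chain.size 2) :=
  fun x => U.chain.map 1 (U.chain.map 0 x)

theorem bwdPi_surj (U : FTreeLe (k+2) n) : Function.Surjective (bwdPi U) :=
  (U.chain.surj 1).comp (U.chain.surj 0)

@[reducible] noncomputable def bwdTame (U : FTreeLe (k+2) n) (i : Fin (U.chain.size 2)) :
    Tame (∑ x : {x // bwdPi U x = i}, U.mult x.1) where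
  a := Fintype.card {x // bwdPi U x = i}
  b := Fintype.card {y : Fin (U.chain.size 1) // U.chain.map 1 y = i}
  f := fun x =>
    Fintype.equivFin _ ⟨U.chain.map 0 ((Fintype.equivFin {x // bwdPi U x = i}).symm x).1,
      ((Fintype.equivFin {x // bwdPi U x = i}).symm x).2⟩
  surj := by
    intro y
    rcases hz : (Fintype.equivFin {y : Fin (U.chain.size 1) // U.chain.map 1 y = i}).symm y
      with ⟨z, hz2⟩
    obtain ⟨x0, hx0⟩ := U.chain.surj 0 z
    have hx0' : bwdPi U x0 = i := by rw [bwdPi, hx0]; exact hz2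
    refine ⟨Fintype.equivFin _ ⟨x0, hx0'⟩, ?_⟩
    simp only [Equiv.symm_apply_apply]
    have : (⟨U.chain.map 0 x0, by rw [hx0]; exact hz2⟩ :
        {y : Fin (U.chain.size 1) // U.chain.map 1 y = i}) = ⟨z, hz2⟩ := Subtype.ext hx0
    rw [this, ← hz, Equiv.apply_symm_apply]
  μ := fun x => U.mult ((Fintype.equivFin {x // bwdPi U x = i}).symm x).1
  μ_pos := fun x => U.mult_pos _
  μ_sum := Equiv.sum_comp (Fintype.equivFin {x // bwdPi U x = i}).symm (fun z => U.mult z.1)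

@[reducible] noncomputable def bwd (U : FTreeLe (k+2) n) (hx : k = 0 ∨ 2 ≤ U.chain.size (k - 1 + 2)) :
    EFT k n where
  leaves := U.chain.size 2
  chain :=
    { size := fun j => U.chain.size (j+2)
      map := fun j => U.chain.map (j+2)
      surj := fun j => U.chain.surj (j+2)
      size_zero := rfl
      size_top := U.chain.size_top }
  exact := hx
  mult := fun i => ∑ x : {x // bwdPi U x = i}, U.mult x.1
  mult_pos := by
    intro i
    obtain ⟨x, hx'⟩ := bwdPi_surj U i
    calc (1 : ℕ) ≤ U.mult x := U.mult_pos x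
      _ ≤ ∑ x : {x // bwdPi U x = i}, U.mult x.1 :=
        Finset.single_le_sum (f := fun x : {x // bwdPi U x = i} => U.mult x.1)
          (fun _ _ => Nat.zero_le _) (Finset.mem_univ ⟨x, hx'⟩)
  mult_sum := by
    show ∑ i, ∑ x : {x // bwdPi U x = i}, U.mult x.1 = n
    rw [← sum_sigma' (fun σ : Σ i, {x // bwdPi U x = i} => U.mult σ.2.1)]
    rw [Fintype.sum_equiv (Equiv.sigmaFiberEquiv (bwdPi U))
      (fun σ : Σ i, {x // bwdPi U x = i} => U.mult σ.2.1) U.mult (fun σ => rfl)]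
    exact U.mult_sum
  tame := fun i => bwdTame U i

end FShift


/-! ### Iso is an equivalence relation -/

namespace FShift

variable {k n : ℕ}

@[reducible] def FTree.toLe (T : FTree k n) : FTreeLe k n :=
  ⟨T.leaves, T.chain, T.mult, T.mult_pos, T.mult_sum⟩

theorem iso_toLe {T U : FTree k n} : T.Iso U ↔ (FTree.toLe T).Iso (FTree.toLe U) := Iff.rfl

theorem ftreeLe_iso_refl (T : FTreeLe k n) : T.Iso T :=
  ⟨fun i => Equiv.refl _, fun _ _ => rfl, fun _ => rfl⟩

theorem ftreeLe_iso_symm {T U : FTreeLe k n} (h : T.Iso U) : U.Iso T := by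
  obtain ⟨e, hc, hm⟩ := h
  refine ⟨fun i => (e i).symm, fun i x => ?_, fun x => ?_⟩
  · have h1 := hc i ((e i).symm x)
    rw [Equiv.apply_symm_apply] at h1
    rw [← h1, Equiv.symm_apply_apply]
  · have h1 := hm ((e 0).symm x)
    rw [Equiv.apply_symm_apply] at h1
    rw [h1]

theorem ftreeLe_iso_trans {T U V : FTreeLe k n} (h : T.Iso U) (h' : U.Iso V) : T.Iso V := by
  obtain ⟨e, hc, hm⟩ := h
  obtain ⟨f, hc', hm'⟩ := h'
  refine ⟨fun i => (e i).trans (f i), fun i x => ?_, fun x => ?_⟩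
  · show f (i+1) (e (i+1) (T.chain.map i x)) = V.chain.map i (f i (e i x))
    rw [hc, hc']
  · show V.mult (f 0 (e 0 x)) = T.mult x
    rw [hm', hm]

theorem ftreeLe_iso_equiv : Equivalence (fun T U : FTreeLe k n => T.Iso U) :=
  ⟨ftreeLe_iso_refl, ftreeLe_iso_symm, ftreeLe_iso_trans⟩

theorem ftree_iso_equiv : Equivalence (fun T U : FTree k n => T.Iso U) :=
  ⟨fun T => ftreeLe_iso_refl (FTree.toLe T),
   fun h => ftreeLe_iso_symm (T := FTree.toLe _) (U := FTree.toLe _) h,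
   fun h h' => ftreeLe_iso_trans (T := FTree.toLe _) (U := FTree.toLe _) (V := FTree.toLe _) h h'⟩

theorem multOne_of_iso_le {T U : FTreeLe k n} (h : T.Iso U) (hT : T.MultOne) : U.MultOne := by
  obtain ⟨e, hc, hm⟩ := h
  intro x
  have h1 := hm ((e 0).symm x)
  rw [Equiv.apply_symm_apply] at h1
  rw [h1]; exact hT _

theorem multOne_iff_of_iso_le {T U : FTreeLe k n} (h : T.Iso U) : T.MultOne ↔ U.MultOne :=
  ⟨multOne_of_iso_le h, multOne_of_iso_le (ftreeLe_iso_symm h)⟩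

theorem multOne_iff_of_iso {T U : FTree k n} (h : T.Iso U) : T.MultOne ↔ U.MultOne :=
  multOne_iff_of_iso_le (T := FTree.toLe T) (U := FTree.toLe U) h

theorem semisimple_iff_multOne (T : EFT k n) : T.Semisimple ↔ (fwd T).MultOne := by
  constructor
  · intro h x
    exact h ((eqA T).symm x).1 ((eqA T).symm x).2
  · intro h i y
    have h1 := h (eqA T ⟨i, y⟩)
    show (T.tame i).μ y = 1
    have h1' : multSig T ((eqA T).symm (eqA T ⟨i, y⟩)) = 1 := h1
    rw [Equiv.symm_apply_apply] at h1'
    exact h1'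

end FShift


namespace FShift

variable {k n : ℕ}

theorem sigmaCongr_apply'' {ι κ : Type*} {β : ι → Type*} {γ : κ → Type*}
    (f : ι ≃ κ) (F : ∀ i, β i ≃ γ (f i)) (σ : Σ i, β i) :
    Equiv.sigmaCongr f F σ = ⟨f σ.1, F σ.1 σ.2⟩ := rfl

theorem fwd_iso {T U : EFT k n} (h : T.Iso U) : (fwd T).Iso (fwd U) := by
  obtain ⟨e, hc, hm, ht⟩ := h
  choose α β hf hμ using ht
  refine ⟨fun j =>
    match j with
    | 0 => (eqA T).symm.trans ((Equiv.sigmaCongr (e 0) α).trans (eqA U))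
    | 1 => (eqB T).symm.trans ((Equiv.sigmaCongr (e 0) β).trans (eqB U))
    | (j+2) => e j, ?_, ?_⟩
  · intro j x
    match j with
    | 0 =>
      show ((eqB T).symm.trans ((Equiv.sigmaCongr (e 0) β).trans (eqB U)))
          (eqB T (fwdSig T ((eqA T).symm x)))
        = eqB U (fwdSig U ((eqA U).symm
            (((eqA T).symm.trans ((Equiv.sigmaCongr (e 0) α).trans (eqA U))) x)))
      simp only [Equiv.trans_apply, Equiv.symm_apply_apply]
      congr 1
      rcases (eqA T).symm x with ⟨i, y⟩
      rw [sigmaCongr_apply'', sigmaCongr_apply'']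
      show (⟨e 0 i, β i ((T.tame i).f y)⟩ : Σ j, Fin ((U.tame j).b))
        = fwdSig U ⟨e 0 i, α i y⟩
      rw [hf i y]
    | 1 =>
      show e 0 ((eqB T).symm x).1
        = ((eqB U).symm (((eqB T).symm.trans ((Equiv.sigmaCongr (e 0) β).trans (eqB U))) x)).1
      simp only [Equiv.trans_apply, Equiv.symm_apply_apply]
      rfl
    | (j+2) => exact hc j x
  · intro x
    show multSig U ((eqA U).symm
        (((eqA T).symm.trans ((Equiv.sigmaCongr (e 0) α).trans (eqA U))) x))
      = multSig T ((eqA T).symm x)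
    simp only [Equiv.trans_apply, Equiv.symm_apply_apply]
    rcases (eqA T).symm x with ⟨i, y⟩
    rw [sigmaCongr_apply'']
    exact hμ i y

end FShift


namespace FShift

variable {k n : ℕ}

theorem bwd_iso {U V : FTreeLe (k+2) n} (h : U.Iso V)
    (hU : k = 0 ∨ 2 ≤ U.chain.size (k - 1 + 2)) (hV : k = 0 ∨ 2 ≤ V.chain.size (k - 1 + 2)) :
    (bwd U hU).Iso (bwd V hV) := by
  obtain ⟨e, hc, hm⟩ := h
  have key : ∀ x, bwdPi V (e 0 x) = e 2 (bwdPi U x) := by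
    intro x
    show V.chain.map 1 (V.chain.map 0 (e 0 x)) = e 2 (U.chain.map 1 (U.chain.map 0 x))
    rw [← hc 0, ← hc 1]
  have hA : ∀ (i : Fin (U.chain.size 2)) x, bwdPi U x = i ↔ bwdPi V (e 0 x) = e 2 i := by
    intro i x
    rw [key x]
    exact (Equiv.apply_eq_iff_eq (e 2)).symm
  have hB : ∀ (i : Fin (U.chain.size 2)) y,
      U.chain.map 1 y = i ↔ V.chain.map 1 (e 1 y) = e 2 i := by
    intro i y
    rw [← hc 1]
    exact (Equiv.apply_eq_iff_eq (e 2)).symm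
  refine ⟨fun j => e (j+2), fun j x => hc (j+2) x, fun i => ?_, fun i => ?_⟩
  · show ∑ x : {x // bwdPi V x = e 2 i}, V.mult x.1 = ∑ x : {x // bwdPi U x = i}, U.mult x.1
    exact (Fintype.sum_equiv (Equiv.subtypeEquiv (e 0) (hA i)) (fun x => U.mult x.1)
      (fun x => V.mult x.1) (fun x => (hm x.1).symm)).symm
  · show (bwdTame U i).Iso (bwdTame V (e 2 i))
    refine ⟨(Fintype.equivFin {x // bwdPi U x = i}).symm.trans
        ((Equiv.subtypeEquiv (e 0) (hA i)).trans (Fintype.equivFin {x // bwdPi V x = e 2 i})),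
      (Fintype.equivFin {y : Fin (U.chain.size 1) // U.chain.map 1 y = i}).symm.trans
        ((Equiv.subtypeEquiv (e 1) (hB i)).trans
          (Fintype.equivFin {y : Fin (V.chain.size 1) // V.chain.map 1 y = e 2 i})),
      fun x => ?_, fun x => ?_⟩
    · show ((Fintype.equivFin {y : Fin (U.chain.size 1) // U.chain.map 1 y = i}).symm.trans
            ((Equiv.subtypeEquiv (e 1) (hB i)).trans (Fintype.equivFin {y : Fin (V.chain.size 1) // V.chain.map 1 y = e 2 i})))
          ((bwdTame U i).f x)
        = (bwdTame V (e 2 i)).f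
            (((Fintype.equivFin {x // bwdPi U x = i}).symm.trans
              ((Equiv.subtypeEquiv (e 0) (hA i)).trans (Fintype.equivFin {x // bwdPi V x = e 2 i}))) x)
      simp only [bwdTame, Equiv.trans_apply, Equiv.symm_apply_apply]
      congr 1
      apply Subtype.ext
      exact hc 0 _
    · show V.mult ((Fintype.equivFin {x // bwdPi V x = e 2 i}).symm
          (((Fintype.equivFin {x // bwdPi U x = i}).symm.trans
            ((Equiv.subtypeEquiv (e 0) (hA i)).trans (Fintype.equivFin {x // bwdPi V x = e 2 i}))) x)).1
        = U.mult ((Fintype.equivFin {x // bwdPi U x = i}).symm x).1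
      simp only [Equiv.trans_apply, Equiv.symm_apply_apply]
      exact hm _

end FShift


namespace FShift

variable {k n : ℕ}

theorem bwdPi_fwd (T : EFT k n) (x : Fin (fwdSize T 0)) :
    bwdPi (fwd T) x = ((eqA T).symm x).1 := by
  show ((eqB T).symm (eqB T (fwdSig T ((eqA T).symm x)))).1 = ((eqA T).symm x).1
  rw [Equiv.symm_apply_apply]

@[reducible] noncomputable def fwdFiberA (T : EFT k n) (i : Fin ((fwd T).chain.size 2)) :
    {x : Fin ((fwd T).chain.size 0) // bwdPi (fwd T) x = i} ≃ Fin ((T.tame i).a) :=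
  (Equiv.subtypeEquiv (eqA T).symm (fun x => by rw [bwdPi_fwd])).trans (sigmaFstFiber i)

@[reducible] noncomputable def fwdFiberB (T : EFT k n) (i : Fin ((fwd T).chain.size 2)) :
    {y : Fin ((fwd T).chain.size 1) // (fwd T).chain.map 1 y = i} ≃ Fin ((T.tame i).b) :=
  (Equiv.subtypeEquiv (eqB T).symm (fun y => Iff.rfl)).trans (sigmaFstFiber i)

theorem multSig_cast (T : EFT k n) {σ : Σ j, Fin ((T.tame j).a)} {i : Fin (T.chain.size 0)}
    (h : σ.1 = i) :
    (T.tame i).μ (sigmaFstFiber i ⟨σ, h⟩) = multSig T σ := by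
  rcases σ with ⟨j, y⟩
  cases h
  rfl

theorem fwdSig_cast (T : EFT k n) {σ : Σ j, Fin ((T.tame j).a)} {i : Fin (T.chain.size 0)}
    (h : σ.1 = i) :
    sigmaFstFiber i (⟨fwdSig T σ, h⟩ : {τ : Σ j, Fin ((T.tame j).b) // τ.1 = i})
      = (T.tame i).f (sigmaFstFiber i ⟨σ, h⟩) := by
  rcases σ with ⟨j, y⟩
  cases h
  rfl

theorem bwd_fwd_tame (T : EFT k n) (i : Fin ((fwd T).chain.size 2)) :
    (bwdTame (fwd T) i).Iso (T.tame i) := by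
  refine ⟨(Fintype.equivFin _).symm.trans (fwdFiberA T i),
    (Fintype.equivFin _).symm.trans (fwdFiberB T i), fun x => ?_, fun x => ?_⟩
  · show (fwdFiberB T i) ((Fintype.equivFin _).symm ((bwdTame (fwd T) i).f x))
      = (T.tame i).f ((fwdFiberA T i) ((Fintype.equivFin _).symm x))
    simp only [bwdTame, Equiv.symm_apply_apply, fwdFiberA, fwdFiberB, Equiv.trans_apply,
      Equiv.subtypeEquiv_apply, fwdMap]
    exact fwdSig_cast T _
  · show (T.tame i).μ ((fwdFiberA T i) ((Fintype.equivFin _).symm x))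
      = multSig T ((eqA T).symm ((Fintype.equivFin {x // bwdPi (fwd T) x = i}).symm x).1)
    simp only [fwdFiberA, Equiv.trans_apply, Equiv.subtypeEquiv_apply]
    exact multSig_cast T _

theorem bwd_fwd_iso (T : EFT k n)
    (hx : k = 0 ∨ 2 ≤ (fwd T).chain.size (k - 1 + 2)) :
    (bwd (fwd T) hx).Iso T := by
  refine ⟨fun j => Equiv.refl _, fun j x => rfl, fun i => ?_, fun i => ?_⟩
  · have hsum : ∑ x : {x // bwdPi (fwd T) x = i}, multSig T ((eqA T).symm x.1)
        = ∑ y, (T.tame i).μ y :=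
      Fintype.sum_equiv (fwdFiberA T i) _ _ (fun x => (multSig_cast T _).symm)
    show T.mult i = ∑ x : {x // bwdPi (fwd T) x = i}, multSig T ((eqA T).symm x.1)
    rw [hsum, (T.tame i).μ_sum]
  · exact bwd_fwd_tame T i

end FShift


namespace FShift

variable {k n : ℕ}

theorem sigmaCongrRight_apply' {α : Type*} {β₁ β₂ : α → Type*} (F : ∀ a, β₁ a ≃ β₂ a)
    (σ : Σ a, β₁ a) : Equiv.sigmaCongrRight F σ = ⟨σ.1, F σ.1 σ.2⟩ := rfl

theorem sigmaFiberEquiv_apply' {α β : Type*} (f : α → β) (σ : Σ y, {x // f x = y}) :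
    Equiv.sigmaFiberEquiv f σ = σ.2.1 := rfl

theorem fwd_bwd_iso (U : FTreeLe (k+2) n) (hx : k = 0 ∨ 2 ≤ U.chain.size (k - 1 + 2)) :
    (fwd (bwd U hx)).Iso U := by
  refine ⟨fun j =>
    match j with
    | 0 => (eqA (bwd U hx)).symm.trans
        ((Equiv.sigmaCongrRight (fun i => (Fintype.equivFin {x // bwdPi U x = i}).symm)).trans
          (Equiv.sigmaFiberEquiv (bwdPi U)))
    | 1 => (eqB (bwd U hx)).symm.trans
        ((Equiv.sigmaCongrRight
            (fun i => (Fintype.equivFin {y // U.chain.map 1 y = i}).symm)).trans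
          (Equiv.sigmaFiberEquiv (U.chain.map 1)))
    | (j+2) => Equiv.refl (Fin (U.chain.size (j+2))), ?_, ?_⟩
  · intro j x
    match j with
    | 0 =>
      show ((eqB (bwd U hx)).symm.trans
          ((Equiv.sigmaCongrRight
              (fun i => (Fintype.equivFin {y // U.chain.map 1 y = i}).symm)).trans
            (Equiv.sigmaFiberEquiv (U.chain.map 1))))
          (fwdMap (bwd U hx) 0 x)
        = U.chain.map 0 (((eqA (bwd U hx)).symm.trans
            ((Equiv.sigmaCongrRight
                (fun i => (Fintype.equivFin {x // bwdPi U x = i}).symm)).trans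
              (Equiv.sigmaFiberEquiv (bwdPi U)))) x)
      simp only [fwdMap, Equiv.trans_apply, Equiv.symm_apply_apply]
      rcases hσ : (eqA (bwd U hx)).symm x with ⟨i, w⟩
      simp only [fwdSig, bwdTame, sigmaCongrRight_apply', sigmaFiberEquiv_apply',
        Equiv.symm_apply_apply]
    | 1 =>
      show fwdMap (bwd U hx) 1 x
        = U.chain.map 1 (((eqB (bwd U hx)).symm.trans
            ((Equiv.sigmaCongrRight
                (fun i => (Fintype.equivFin {y // U.chain.map 1 y = i}).symm)).trans
              (Equiv.sigmaFiberEquiv (U.chain.map 1)))) x)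
      simp only [fwdMap, Equiv.trans_apply]
      rcases hτ : (eqB (bwd U hx)).symm x with ⟨i, w⟩
      simp only [sigmaCongrRight_apply', sigmaFiberEquiv_apply']
      exact (((Fintype.equivFin {y // U.chain.map 1 y = i}).symm w).2).symm
    | (j+2) => rfl
  · intro x
    show U.mult (((eqA (bwd U hx)).symm.trans
        ((Equiv.sigmaCongrRight
            (fun i => (Fintype.equivFin {x // bwdPi U x = i}).symm)).trans
          (Equiv.sigmaFiberEquiv (bwdPi U)))) x)
      = multSig (bwd U hx) ((eqA (bwd U hx)).symm x)
    simp only [Equiv.trans_apply]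
    rcases hσ : (eqA (bwd U hx)).symm x with ⟨i, w⟩
    simp only [sigmaCongrRight_apply', sigmaFiberEquiv_apply', multSig, bwdTame]

end FShift

/-- Shifting heights by 2 gives, for every n ≥ 1 and k ≥ 1, a bijection between
isomorphism classes of untwisted extended fission trees of slope k and rank n
and isomorphism classes of untwisted fission trees of slope k+2 and rank n;
moreover isomorphism classes of untwisted extended fission trees of slope 0 and
rank n are in bijection with isomorphism classes of untwisted fission trees of
slope ≤ 2 and rank n. Under these bijections the semisimple extended fission
trees correspond exactly to the multiplicity-one fission trees. -/
theorem extended_fission_tree_shift (n : ℕ) (hn : 1 ≤ n) :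
    (∀ k : ℕ, 1 ≤ k →
      ∃ F : Quot (fun T U : EFT k n => T.Iso U) ≃
            Quot (fun T U : FTree (k+2) n => T.Iso U),
        ∀ (T : EFT k n) (U : FTree (k+2) n),
          F (Quot.mk _ T) = Quot.mk _ U → (T.Semisimple ↔ U.MultOne)) ∧
    (∃ F : Quot (fun T U : EFT 0 n => T.Iso U) ≃
           Quot (fun T U : FTreeLe 2 n => T.Iso U),
      ∀ (T : EFT 0 n) (U : FTreeLe 2 n),
        F (Quot.mk _ T) = Quot.mk _ U → (T.Semisimple ↔ U.MultOne)) := by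
  constructor
  · intro k hk
    have hres : ∀ V : FTree (k+2) n,
        k = 0 ∨ 2 ≤ (FShift.FTree.toLe V).chain.size (k - 1 + 2) := by
      intro V
      right
      have h := V.exact.resolve_left (by omega)
      have e : k - 1 + 2 = k + 2 - 1 := by omega
      rw [e]
      exact h
    refine ⟨⟨Quot.map (FShift.fwdT hk) ?_,
        Quot.map (fun V => FShift.bwd (FShift.FTree.toLe V) (hres V)) ?_, ?_, ?_⟩, ?_⟩
    · intro T U h
      exact FShift.fwd_iso h
    · intro V V' h
      exact FShift.bwd_iso (U := FShift.FTree.toLe V) (V := FShift.FTree.toLe V') h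
        (hres V) (hres V')
    · intro q
      induction q using Quot.ind with
      | _ T => exact Quot.sound (FShift.bwd_fwd_iso T _)
    · intro q
      induction q using Quot.ind with
      | _ V => exact Quot.sound (FShift.fwd_bwd_iso (FShift.FTree.toLe V) (hres V))
    · intro T U hF
      have hF' : Quot.mk _ (FShift.fwdT hk T) = Quot.mk _ U := hF
      have h2 := (FShift.ftree_iso_equiv.eqvGen_iff).mp (Quot.eq.mp hF')
      rw [FShift.semisimple_iff_multOne T]
      exact FShift.multOne_iff_of_iso h2
  · refine ⟨⟨Quot.map (FShift.fwd (k := 0)) ?_,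
        Quot.map (fun V : FTreeLe 2 n => FShift.bwd (k := 0) V (Or.inl rfl)) ?_, ?_, ?_⟩, ?_⟩
    · intro T U h
      exact FShift.fwd_iso h
    · intro V V' h
      exact FShift.bwd_iso h (Or.inl rfl) (Or.inl rfl)
    · intro q
      induction q using Quot.ind with
      | _ T => exact Quot.sound (FShift.bwd_fwd_iso T _)
    · intro q
      induction q using Quot.ind with
      | _ V => exact Quot.sound (FShift.fwd_bwd_iso V (Or.inl rfl))
    · intro T U hF
      have hF' : Quot.mk _ (FShift.fwd T) = Quot.mk _ U := hF
      have h2 := (FShift.ftreeLe_iso_equiv.eqvGen_iff).mp (Quot.eq.mp hF')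
      rw [FShift.semisimple_iff_multOne T]
      exact FShift.multOne_iff_of_iso_le h2
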